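/- Let M = [[A, B],[0, C]] be an m×m nonnegative real matrix in block upper-triangular form, where A is a d×d primitive nonnegative matrix (1 ≤ d < m) with Perron–Frobenius eigenvalue λ and strictly positive right eigenvector ω_R normalized so that the sum of its entries is 1. Suppose the spectral radius of C is strictly less than λ, and that the upper-right d×(m−d) block of Mⁿ is strictly positive for all sufficiently large n. Then (ω_R, 0) ∈ ℝ^m is, up to positive scalar multiple, the unique eigenvector of M all of whose entries are nonnegative, and for every nonnegative nonzero vector w ∈ ℝ^m, Mⁿw / |Mⁿw|₁ → (ω_R, 0) as n → ∞, where |·|₁ denotes the sum of absolute values of entries. -/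

import Mathlib

/-!
Write `M = [[A, B], [0, C]]`, `w = (w₁, w₂)`. The bottom block of `Mⁿ w` is `Cⁿ w₂`, and since every
complex eigenvalue of `C` is smaller than `λ` in modulus, Gelfand's formula makes `‖Cⁿ‖ / λⁿ`
summable. The rescaled top block `zₙ = λ⁻ⁿ (Mⁿ w)₁` then satisfies `zₙ₊₁ = P zₙ + εₙ` with
`P = λ⁻¹ A`, `P ω = ω`, and `εₙ ≥ 0` summable. Measured against `ω`, the least ratio `minᵢ zᵢ / ωᵢ`
never decreases, the largest ratio grows by at most a summable amount, and because `Pᵏ > 0` the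
gap between them shrinks by a fixed factor over every `k` steps. So both ratios converge to a
common `α`, that is `zₙ → α ω`; once some `(Mⁿ w)₁` is positive (by primitivity of `A` or by the
positive upper-right block) `α > 0`, and ℓ¹-normalising gives the limit `(ω, 0)`. A nonnegative
eigenvector `v` has all its normalised iterates on the line `ℝ v`, which is closed, so `(ω, 0)`
lies on it.
-/

open Matrix Filter Topology

namespace Matrix

variable {κ ι : Type*} [Fintype ι] {P : Matrix κ ι ℝ} {v w : ι → ℝ}

lemma mulVec_mono_of_nonneg (hP : ∀ i j, 0 ≤ P i j) (h : v ≤ w) : P *ᵥ v ≤ P *ᵥ w :=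
  fun i => Finset.sum_le_sum fun j _ => mul_le_mul_of_nonneg_left (h j) (hP i j)

lemma mulVec_nonneg_of_nonneg (hP : ∀ i j, 0 ≤ P i j) (hv : 0 ≤ v) : 0 ≤ P *ᵥ v := by
  simpa using mulVec_mono_of_nonneg hP hv

lemma mulVec_apply_pos (hP : ∀ i j, 0 ≤ P i j) (hv : 0 ≤ v) {i : κ} {j : ι} (hPij : 0 < P i j)
    (hvj : 0 < v j) : 0 < (P *ᵥ v) i :=
  Finset.sum_pos' (fun l _ => mul_nonneg (hP i l) (hv l)) ⟨j, Finset.mem_univ j, mul_pos hPij hvj⟩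

variable [DecidableEq ι]

lemma pow_apply_nonneg_of_nonneg {Q : Matrix ι ι ℝ} (hQ : ∀ i j, 0 ≤ Q i j) (n : ℕ) (i j : ι) :
    0 ≤ (Q ^ n) i j := by
  induction n generalizing j with
  | zero => rw [pow_zero, one_apply]; split_ifs <;> norm_num
  | succ n ih =>
    rw [pow_succ, mul_apply]
    exact Finset.sum_nonneg fun l _ => mul_nonneg (ih l) (hQ l j)

lemma pow_mulVec_of_mulVec_eq_smul {R : Type*} [CommSemiring R] {Q : Matrix ι ι R} {u : ι → R}
    {μ : R} (h : Q *ᵥ u = μ • u) (n : ℕ) : Q ^ n *ᵥ u = μ ^ n • u := by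
  induction n with
  | zero => simp
  | succ n ih => rw [pow_succ, ← mulVec_mulVec, h, mulVec_smul, ih, smul_smul, ← pow_succ']

end Matrix

section Ratio

variable {ι : Type*} [Fintype ι] {ω v w : ι → ℝ}

noncomputable def minRatio (ω v : ι → ℝ) : ℝ := ⨅ i, v i / ω i

noncomputable def maxRatio (ω v : ι → ℝ) : ℝ := ⨆ i, v i / ω i

variable [Nonempty ι]

lemma le_minRatio_iff (hω : ∀ i, 0 < ω i) {c : ℝ} : c ≤ minRatio ω v ↔ c • ω ≤ v := by
  simp only [minRatio, le_ciInf_iff (Set.finite_range _).bddBelow, Pi.le_def, Pi.smul_apply,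
    smul_eq_mul, le_div_iff₀ (hω _)]

lemma maxRatio_le_iff (hω : ∀ i, 0 < ω i) {c : ℝ} : maxRatio ω v ≤ c ↔ v ≤ c • ω := by
  simp only [maxRatio, ciSup_le_iff (Set.finite_range _).bddAbove, Pi.le_def, Pi.smul_apply,
    smul_eq_mul, div_le_iff₀ (hω _)]

lemma minRatio_smul_le (hω : ∀ i, 0 < ω i) : minRatio ω v • ω ≤ v :=
  (le_minRatio_iff hω).1 le_rfl

lemma le_maxRatio_smul (hω : ∀ i, 0 < ω i) : v ≤ maxRatio ω v • ω :=
  (maxRatio_le_iff hω).1 le_rfl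

lemma minRatio_le_maxRatio : minRatio ω v ≤ maxRatio ω v :=
  ciInf_le_ciSup (Set.finite_range _).bddBelow (Set.finite_range _).bddAbove

lemma minRatio_mono (hω : ∀ i, 0 < ω i) (h : v ≤ w) : minRatio ω v ≤ minRatio ω w :=
  (le_minRatio_iff hω).2 ((minRatio_smul_le hω).trans h)

lemma maxRatio_add_le (hω : ∀ i, 0 < ω i) : maxRatio ω (v + w) ≤ maxRatio ω v + maxRatio ω w :=
  (maxRatio_le_iff hω).2 <| add_smul (maxRatio ω v) _ ω ▸
    add_le_add (le_maxRatio_smul hω) (le_maxRatio_smul hω)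

lemma maxRatio_le_norm_mul (hω : ∀ i, 0 < ω i) : maxRatio ω v ≤ ‖v‖ * maxRatio ω 1 := by
  refine (maxRatio_le_iff hω).2 fun i => ?_
  have hv : v i ≤ ‖v‖ := (le_abs_self _).trans (norm_le_pi_norm v i)
  have h1 : (1 : ℝ) ≤ maxRatio ω 1 * ω i := le_maxRatio_smul (v := 1) hω i
  calc v i ≤ ‖v‖ * 1 := by rw [mul_one]; exact hv
    _ ≤ ‖v‖ * (maxRatio ω 1 * ω i) := mul_le_mul_of_nonneg_left h1 (norm_nonneg v)
    _ = (‖v‖ * maxRatio ω 1) • ω i := by rw [smul_eq_mul, mul_assoc]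

lemma minRatio_pos (hω : ∀ i, 0 < ω i) (hv : ∀ i, 0 < v i) : 0 < minRatio ω v := by
  obtain ⟨i, hi⟩ := Finite.exists_min fun i => v i / ω i
  exact (div_pos (hv i) (hω i)).trans_le (le_ciInf hi)

end Ratio

section FixedPositiveVector

variable {ι : Type*} [Fintype ι] [Nonempty ι] {ω v : ι → ℝ} {P : Matrix ι ι ℝ}

lemma minRatio_le_minRatio_mulVec (hω : ∀ i, 0 < ω i) (hP : ∀ i j, 0 ≤ P i j)
    (hPω : P *ᵥ ω = ω) : minRatio ω v ≤ minRatio ω (P *ᵥ v) :=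
  (le_minRatio_iff hω).2 <| by
    simpa [mulVec_smul, hPω] using mulVec_mono_of_nonneg hP (minRatio_smul_le (v := v) hω)

lemma maxRatio_mulVec_le_maxRatio (hω : ∀ i, 0 < ω i) (hP : ∀ i j, 0 ≤ P i j)
    (hPω : P *ᵥ ω = ω) : maxRatio ω (P *ᵥ v) ≤ maxRatio ω v :=
  (maxRatio_le_iff hω).2 <| by
    simpa [mulVec_smul, hPω] using mulVec_mono_of_nonneg hP (le_maxRatio_smul (v := v) hω)

lemma minRatio_add_mul_sub_le_minRatio_mulVec (hω : ∀ i, 0 < ω i) (hP : ∀ i j, 0 ≤ P i j)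
    (hPω : P *ᵥ ω = ω) {c : ℝ} (hc : ∀ i j, c * ω i ≤ P i j * ω j) :
    minRatio ω v + c * (maxRatio ω v - minRatio ω v) ≤ minRatio ω (P *ᵥ v) := by
  set m := minRatio ω v
  set M := maxRatio ω v
  obtain ⟨j₀, hj₀⟩ := Finite.exists_max fun j => v j / ω j
  have hMj₀ : M * ω j₀ = v j₀ := by
    rw [show M = v j₀ / ω j₀ from le_antisymm (ciSup_le hj₀)
      (le_ciSup (f := fun j => v j / ω j) (Set.finite_range _).bddAbove j₀),
      div_mul_cancel₀ _ (hω j₀).ne']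
  have hgap : 0 ≤ v - m • ω := sub_nonneg.2 (minRatio_smul_le hω)
  refine (le_minRatio_iff hω).2 fun i => ?_
  have hsplit : (P *ᵥ v) i = m * ω i + ∑ j, P i j * (v - m • ω) j := by
    have := congrFun (mulVec_add P (m • ω) (v - m • ω)) i
    rw [add_sub_cancel, mulVec_smul, hPω] at this
    exact this
  have hj₀term : P i j₀ * (v - m • ω) j₀ ≤ ∑ j, P i j * (v - m • ω) j :=
    Finset.single_le_sum (f := fun j => P i j * (v - m • ω) j)
      (fun j _ => mul_nonneg (hP i j) (hgap j)) (Finset.mem_univ j₀)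
  have hosc : c * ω i * (M - m) ≤ P i j₀ * (v - m • ω) j₀ := by
    calc c * ω i * (M - m) ≤ P i j₀ * ω j₀ * (M - m) :=
          mul_le_mul_of_nonneg_right (hc i j₀) (sub_nonneg.2 minRatio_le_maxRatio)
      _ = P i j₀ * (v - m • ω) j₀ := by
          simp only [Pi.sub_apply, Pi.smul_apply, smul_eq_mul, ← hMj₀]; ring
  rw [Pi.smul_apply, smul_eq_mul, hsplit]
  linarith

lemma exists_pos_forall_mul_le_apply_mul (hω : ∀ i, 0 < ω i) (hP : ∀ i j, 0 < P i j) :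
    ∃ c > 0, ∀ i j, c * ω i ≤ P i j * ω j := by
  obtain ⟨p, hp⟩ := Finite.exists_min fun p : ι × ι => P p.1 p.2 * ω p.2 / ω p.1
  refine ⟨_, div_pos (mul_pos (hP p.1 p.2) (hω p.2)) (hω p.1), fun i j => ?_⟩
  exact (le_div_iff₀ (hω i)).1 (hp (i, j))

end FixedPositiveVector

lemma exists_tendsto_of_le_add_of_summable {f δ : ℕ → ℝ} (hf : ∀ n, f (n + 1) ≤ f n + δ n)
    (hδ : Summable δ) (hb : BddBelow (Set.range f)) : ∃ β, Tendsto f atTop (𝓝 β) := by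
  set S : ℕ → ℝ := fun n => ∑ i ∈ Finset.range n, δ i
  have hS : Tendsto S atTop (𝓝 (∑' i, δ i)) := hδ.hasSum.tendsto_sum_nat
  have hanti : Antitone (f - S) := antitone_nat_of_succ_le fun n => by
    simp only [Pi.sub_apply, S, Finset.sum_range_succ]
    linarith [hf n]
  have hbdd : BddBelow (Set.range (f - S)) := by
    obtain ⟨b, hb⟩ := hb
    obtain ⟨B, hB⟩ := hS.bddAbove_range
    refine ⟨b - B, ?_⟩
    rintro _ ⟨n, rfl⟩
    exact sub_le_sub (hb ⟨n, rfl⟩) (hB ⟨n, rfl⟩)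
  exact ⟨_, by simpa using (tendsto_atTop_ciInf hanti hbdd).add hS⟩

lemma exists_tendsto_of_oscillation_contracts {m M δ : ℕ → ℝ} {c : ℝ} {k : ℕ}
    (hm : Monotone m) (hmM : ∀ n, m n ≤ M n) (hM : ∀ n, M (n + 1) ≤ M n + δ n)
    (hδ : Summable δ) (hc : 0 < c) (hcontr : ∀ n, m n + c * (M n - m n) ≤ m (n + k)) :
    ∃ α, Tendsto m atTop (𝓝 α) ∧ Tendsto M atTop (𝓝 α) := by
  obtain ⟨β, hβ⟩ := exists_tendsto_of_le_add_of_summable hM hδ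
    ⟨m 0, by rintro _ ⟨n, rfl⟩; exact (hm n.zero_le).trans (hmM n)⟩
  obtain ⟨B, hB⟩ := hβ.bddAbove_range
  obtain ⟨α, hα⟩ : ∃ α, Tendsto m atTop (𝓝 α) :=
    ⟨_, tendsto_atTop_ciSup hm ⟨B, by rintro _ ⟨n, rfl⟩; exact (hmM n).trans (hB ⟨n, rfl⟩)⟩⟩
  have hαβ : α ≤ β := le_of_tendsto_of_tendsto' hα hβ hmM
  have hβα : α + c * (β - α) ≤ α := le_of_tendsto_of_tendsto'
    (hα.add ((hβ.sub hα).const_mul c)) (hα.comp (tendsto_add_atTop_nat k)) hcontr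
  obtain rfl : β = α := by nlinarith
  exact ⟨β, hα, hβ⟩

lemma exists_tendsto_smul_of_perturbed_orbit {ι : Type*} [Fintype ι] [Nonempty ι] [DecidableEq ι]
    {ω : ι → ℝ} {P : Matrix ι ι ℝ} {k : ℕ} {z ε : ℕ → ι → ℝ}
    (hω : ∀ i, 0 < ω i) (hP : ∀ i j, 0 ≤ P i j) (hPω : P *ᵥ ω = ω)
    (hPk : ∀ i j, 0 < (P ^ k) i j) (hε : ∀ n, 0 ≤ ε n) (hεsum : Summable fun n => ‖ε n‖)
    (hz : ∀ n, z (n + 1) = P *ᵥ z n + ε n) :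
    ∃ α, (∀ n, minRatio ω (z n) ≤ α) ∧ Tendsto z atTop (𝓝 (α • ω)) := by
  obtain ⟨c, hc, hcP⟩ := exists_pos_forall_mul_le_apply_mul hω hPk
  have hPkω : P ^ k *ᵥ ω = ω := by
    simpa using pow_mulVec_of_mulVec_eq_smul (Q := P) (μ := 1) (by rwa [one_smul]) k
  have hstep : ∀ n, P *ᵥ z n ≤ z (n + 1) := fun n => hz n ▸ le_add_of_nonneg_right (hε n)
  have horbit : ∀ n j, P ^ j *ᵥ z n ≤ z (n + j) := by
    intro n j
    induction j with
    | zero => simp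
    | succ j ih =>
      calc P ^ (j + 1) *ᵥ z n = P *ᵥ (P ^ j *ᵥ z n) := by rw [pow_succ', mulVec_mulVec]
        _ ≤ P *ᵥ z (n + j) := mulVec_mono_of_nonneg hP ih
        _ ≤ z (n + j + 1) := hstep _
  have hmono : Monotone fun n => minRatio ω (z n) := monotone_nat_of_le_succ fun n =>
    (minRatio_le_minRatio_mulVec hω hP hPω).trans (minRatio_mono hω (hstep n))
  have hmax : ∀ n, maxRatio ω (z (n + 1)) ≤ maxRatio ω (z n) + ‖ε n‖ * maxRatio ω 1 := by
    intro n
    rw [hz n]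
    exact (maxRatio_add_le hω).trans
      (add_le_add (maxRatio_mulVec_le_maxRatio hω hP hPω) (maxRatio_le_norm_mul hω))
  have hcontr : ∀ n, minRatio ω (z n) + c * (maxRatio ω (z n) - minRatio ω (z n))
      ≤ minRatio ω (z (n + k)) := fun n =>
    (minRatio_add_mul_sub_le_minRatio_mulVec hω (fun i j => (hPk i j).le) hPkω hcP).trans
      (minRatio_mono hω (horbit n k))
  obtain ⟨α, hmα, hMα⟩ := exists_tendsto_of_oscillation_contracts hmono
    (fun _ => minRatio_le_maxRatio) hmax (hεsum.mul_right _) hc hcontr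
  refine ⟨α, hmono.ge_of_tendsto hmα, tendsto_pi_nhds.2 fun i => ?_⟩
  exact tendsto_of_tendsto_of_tendsto_of_le_of_le (hmα.mul_const (ω i)) (hMα.mul_const (ω i))
    (fun n => minRatio_smul_le hω i) (fun n => le_maxRatio_smul hω i)

section SpectralDecay

open scoped NNReal ENNReal

lemma summable_norm_pow_div_of_spectralRadius_lt {A : Type*} [NormedRing A] [NormedAlgebra ℂ A]
    [CompleteSpace A] (a : A) {ρ : ℝ≥0} (h : spectralRadius ℂ a < ρ) :
    Summable fun n => ‖a ^ n‖ / ρ ^ n := by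
  obtain ⟨r, hsr, hrρ⟩ := exists_between h
  lift r to ℝ≥0 using hrρ.ne_top
  have hrρ' : (r : ℝ) < ρ := by exact_mod_cast hrρ
  have hρ : (0 : ℝ) < ρ := r.coe_nonneg.trans_lt hrρ'
  have hgelfand := spectrum.pow_nnnorm_pow_one_div_tendsto_nhds_spectralRadius a
  have hpow : ∀ᶠ n : ℕ in atTop, ‖a ^ n‖ < (r : ℝ) ^ n := by
    filter_upwards [hgelfand.eventually_lt_const hsr, eventually_ne_atTop 0] with n hn hn0
    rw [one_div, ENNReal.rpow_inv_lt_iff (by positivity), ENNReal.rpow_natCast] at hn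
    exact_mod_cast hn
  refine Summable.of_norm_bounded_eventually_nat
    (summable_geometric_of_lt_one (by positivity) ((div_lt_one hρ).2 hrρ')) ?_
  filter_upwards [hpow] with n hn
  rw [Real.norm_of_nonneg (by positivity), div_pow]
  exact div_le_div_of_nonneg_right hn.le (by positivity)

attribute [local instance] Matrix.linftyOpNormedAddCommGroup Matrix.linftyOpNormedRing
  Matrix.linftyOpNormedAlgebra

lemma Matrix.linfty_opNorm_map_ofReal {ι κ : Type*} [Fintype ι] [Fintype κ] (C : Matrix ι κ ℝ) :
    ‖C.map (Complex.ofReal : ℝ → ℂ)‖ = ‖C‖ := by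
  simp [← coe_nnnorm, linfty_opNNNorm_def, Complex.nnnorm_real]

lemma Matrix.summable_norm_pow_div_of_forall_isRoot_charpoly {ι : Type*} [Fintype ι]
    [DecidableEq ι] (C : Matrix ι ι ℝ) {ρ : ℝ} (hρ : 0 < ρ)
    (hC : ∀ μ : ℂ, (C.map (Complex.ofReal : ℝ → ℂ)).charpoly.IsRoot μ → ‖μ‖ < ρ) :
    Summable fun n => ‖C ^ n‖ / ρ ^ n := by
  cases isEmpty_or_nonempty ι
  · simp [Subsingleton.elim _ (0 : Matrix ι ι ℝ)]
  have : CompleteSpace (Matrix ι ι ℂ) := FiniteDimensional.complete ℂ _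
  have hsr : spectralRadius ℂ (C.map (Complex.ofReal : ℝ → ℂ)) < ρ.toNNReal :=
    spectrum.spectralRadius_lt_of_forall_lt _ fun μ hμ => Real.lt_toNNReal_iff_coe_lt.2 <|
      hC μ (mem_spectrum_iff_isRoot_charpoly.1 hμ)
  have hmap (n : ℕ) : C.map (Complex.ofReal : ℝ → ℂ) ^ n = (C ^ n).map Complex.ofReal :=
    (Matrix.map_pow C Complex.ofRealHom n).symm
  simpa [hmap, linfty_opNorm_map_ofReal, hρ.le] using
    summable_norm_pow_div_of_spectralRadius_lt _ hsr

end SpectralDecay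

namespace Matrix

section UpperBlockTriangular

variable {l m R : Type*} [Fintype l] [Fintype m] [Semiring R]
  (A : Matrix l l R) (B : Matrix l m R) (C : Matrix m m R)

lemma fromBlocks_zero₂₁_mulVec_inl (x : l ⊕ m → R) :
    (fromBlocks A B 0 C *ᵥ x) ∘ Sum.inl = A *ᵥ (x ∘ Sum.inl) + B *ᵥ (x ∘ Sum.inr) := by
  simp [fromBlocks_mulVec]

lemma fromBlocks_zero₂₁_mulVec_inr (x : l ⊕ m → R) :
    (fromBlocks A B 0 C *ᵥ x) ∘ Sum.inr = C *ᵥ (x ∘ Sum.inr) := by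
  simp [fromBlocks_mulVec]

lemma fromBlocks_zero₂₁_mulVec_sumElim_zero (u : l → R) :
    fromBlocks A B 0 C *ᵥ Sum.elim u (fun _ => 0) = Sum.elim (A *ᵥ u) (fun _ => 0) := by
  ext (i | i) <;> simp [fromBlocks_mulVec, ← Pi.zero_def]

variable [DecidableEq l] [DecidableEq m]

lemma fromBlocks_zero₂₁_pow_mulVec_inr (n : ℕ) (x : l ⊕ m → R) :
    (fromBlocks A B 0 C ^ n *ᵥ x) ∘ Sum.inr = C ^ n *ᵥ (x ∘ Sum.inr) := by
  induction n with
  | zero => simp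
  | succ n ih =>
    rw [pow_succ', ← mulVec_mulVec, fromBlocks_zero₂₁_mulVec_inr, ih, mulVec_mulVec, ← pow_succ']

lemma fromBlocks_zero₂₁_pow_succ_mulVec_inl (n : ℕ) (x : l ⊕ m → R) :
    (fromBlocks A B 0 C ^ (n + 1) *ᵥ x) ∘ Sum.inl =
      A *ᵥ ((fromBlocks A B 0 C ^ n *ᵥ x) ∘ Sum.inl) + B *ᵥ (C ^ n *ᵥ (x ∘ Sum.inr)) := by
  rw [pow_succ', ← mulVec_mulVec, fromBlocks_zero₂₁_mulVec_inl,
    fromBlocks_zero₂₁_pow_mulVec_inr]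

lemma fromBlocks_zero₂₁_pow_mulVec_sumElim_zero (n : ℕ) (u : l → R) :
    fromBlocks A B 0 C ^ n *ᵥ Sum.elim u (fun _ => 0) = Sum.elim (A ^ n *ᵥ u) (fun _ => 0) := by
  induction n with
  | zero => simp
  | succ n ih =>
    rw [pow_succ', ← mulVec_mulVec, ih, fromBlocks_zero₂₁_mulVec_sumElim_zero, mulVec_mulVec,
      ← pow_succ']

end UpperBlockTriangular

end Matrix

section L1Normalization

variable {ι : Type*} [Fintype ι]

lemma inv_sum_abs_smul_smul_of_pos {t : ℝ} (ht : 0 < t) (v : ι → ℝ) :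
    (∑ i, |(t • v) i|)⁻¹ • (t • v) = (∑ i, |v i|)⁻¹ • v := by
  have hsum : ∑ i, |(t • v) i| = t * ∑ i, |v i| := by
    simp [abs_mul, abs_of_pos ht, Finset.mul_sum]
  rw [hsum, smul_smul, _root_.mul_inv_rev, inv_mul_cancel_right₀ ht.ne']

lemma Filter.Tendsto.inv_sum_abs_smul {y : ℕ → ι → ℝ} {L : ι → ℝ}
    (hy : Tendsto y atTop (𝓝 L)) (hL : L ≠ 0) :
    Tendsto (fun n => (∑ i, |y n i|)⁻¹ • y n) atTop (𝓝 ((∑ i, |L i|)⁻¹ • L)) := by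
  obtain ⟨i₀, hi₀⟩ := Function.ne_iff.1 hL
  have hsum : ∑ i, |L i| ≠ 0 := (Finset.sum_pos' (fun i _ => abs_nonneg (L i))
    ⟨i₀, Finset.mem_univ _, abs_pos.2 hi₀⟩).ne'
  exact ((tendsto_finsetSum _ fun i _ => (tendsto_pi_nhds.1 hy i).abs).inv₀ hsum).smul hy

end L1Normalization

lemma exists_pos_smul_eq_of_tendsto_smul {ι : Type*} {v u : ι → ℝ} {f : ℕ → ℝ} (hv : 0 ≤ v)
    (h : Tendsto (fun n => f n • v) atTop (𝓝 u)) {i₀ : ι} (hu : 0 < u i₀) :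
    ∃ c : ℝ, 0 < c ∧ v = c • u := by
  obtain ⟨s, rfl⟩ : ∃ s : ℝ, s • v = u := Submodule.mem_span_singleton.1 <|
    (Submodule.span ℝ {v}).closed_of_finiteDimensional.mem_of_tendsto h <|
      Eventually.of_forall fun n => Submodule.smul_mem _ _ (Submodule.mem_span_singleton_self v)
  have hs : 0 < s := pos_of_mul_pos_left hu (hv i₀)
  exact ⟨s⁻¹, inv_pos.2 hs, by rw [smul_smul, inv_mul_cancel₀ hs.ne', one_smul]⟩

section BlockConvergence

attribute [local instance] Matrix.linftyOpNormedAddCommGroup Matrix.linftyOpNormedRing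

variable {l m : Type*} [Fintype l] [Fintype m] [DecidableEq l] [DecidableEq m]

lemma summable_norm_inv_pow_smul_pow_mulVec {C : Matrix m m ℝ} {lam : ℝ} (hlam : 0 < lam)
    (hC : Summable fun n => ‖C ^ n‖ / lam ^ n) (v : m → ℝ) :
    Summable fun n => ‖(lam ^ n)⁻¹ • (C ^ n *ᵥ v)‖ := by
  refine (hC.mul_right ‖v‖).of_nonneg_of_le (fun _ => norm_nonneg _) fun n => ?_
  rw [norm_smul, norm_inv, Real.norm_of_nonneg (by positivity), inv_mul_eq_div, div_mul_eq_mul_div]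
  exact div_le_div_of_nonneg_right (linfty_opNorm_mulVec _ _) (by positivity)

variable {A : Matrix l l ℝ} {B : Matrix l m ℝ} {C : Matrix m m ℝ} {lam : ℝ} {ω : l → ℝ}
  {w : l ⊕ m → ℝ} {k n₀ : ℕ}

lemma exists_forall_pos_fromBlocks_pow_mulVec_inl (hM : ∀ i j, 0 ≤ fromBlocks A B 0 C i j)
    (hk : ∀ i j, 0 < (A ^ k) i j)
    (hpos : ∃ N, ∀ n ≥ N, ∀ i j, 0 < (fromBlocks A B 0 C ^ n) (Sum.inl i) (Sum.inr j))
    (hw : 0 ≤ w) (hw0 : w ≠ 0) :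
    ∃ n₀, ∀ i, 0 < (fromBlocks A B 0 C ^ n₀ *ᵥ w) (Sum.inl i) := by
  obtain ⟨s, hs⟩ : ∃ s, 0 < w s := (Pi.lt_def.1 (lt_of_le_of_ne hw (Ne.symm hw0))).2
  rcases s with j | j
  · refine ⟨k, fun i => ?_⟩
    have hle : (Sum.elim (w ∘ Sum.inl) fun _ => 0) ≤ w := by
      rintro (i | i)
      exacts [le_rfl, hw _]
    calc 0 < (A ^ k *ᵥ (w ∘ Sum.inl)) i :=
          mulVec_apply_pos (fun i j => (hk i j).le) (fun i => hw _) (hk i j) hs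
      _ = (fromBlocks A B 0 C ^ k *ᵥ Sum.elim (w ∘ Sum.inl) fun _ => 0) (Sum.inl i) := by
          rw [fromBlocks_zero₂₁_pow_mulVec_sumElim_zero]
          rfl
      _ ≤ _ := mulVec_mono_of_nonneg (pow_apply_nonneg_of_nonneg hM k) hle _
  · obtain ⟨N, hN⟩ := hpos
    exact ⟨N, fun i => mulVec_apply_pos (pow_apply_nonneg_of_nonneg hM N) hw (hN N le_rfl i j) hs⟩

variable [Nonempty l]

lemma exists_tendsto_inv_pow_smul_fromBlocks_pow_mulVec
    (hM : ∀ i j, 0 ≤ fromBlocks A B 0 C i j) (hk : ∀ i j, 0 < (A ^ k) i j) (hlam : 0 < lam)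
    (hω : ∀ i, 0 < ω i) (heig : A *ᵥ ω = lam • ω) (hC : Summable fun n => ‖C ^ n‖ / lam ^ n)
    (hw : 0 ≤ w) (hw₀ : ∀ i, 0 < (fromBlocks A B 0 C ^ n₀ *ᵥ w) (Sum.inl i)) :
    ∃ α : ℝ, 0 < α ∧ Tendsto (fun n => (lam ^ n)⁻¹ • (fromBlocks A B 0 C ^ n *ᵥ w)) atTop
      (𝓝 (Sum.elim (α • ω) fun _ => 0)) := by
  set M := fromBlocks A B 0 C
  set y : ℕ → m → ℝ := fun n => (lam ^ n)⁻¹ • (C ^ n *ᵥ (w ∘ Sum.inr))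
  set z : ℕ → l → ℝ := fun n => (lam ^ n)⁻¹ • ((M ^ n *ᵥ w) ∘ Sum.inl)
  have hy := summable_norm_inv_pow_smul_pow_mulVec hlam hC (w ∘ Sum.inr)
  have hP : ∀ i j, 0 ≤ (lam⁻¹ • A) i j := fun i j =>
    mul_nonneg (inv_nonneg.2 hlam.le) (hM (.inl i) (.inl j))
  have hPω : (lam⁻¹ • A) *ᵥ ω = ω := by
    rw [smul_mulVec, heig, smul_smul, inv_mul_cancel₀ hlam.ne', one_smul]
  have hPk : ∀ i j, 0 < ((lam⁻¹ • A) ^ k) i j := fun i j => by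
    rw [smul_pow]
    exact mul_pos (by positivity) (hk i j)
  have hε : ∀ n, 0 ≤ (lam⁻¹ • B) *ᵥ y n := fun n => by
    refine mulVec_nonneg_of_nonneg (fun i j => mul_nonneg (inv_nonneg.2 hlam.le)
      (hM (.inl i) (.inr j))) (smul_nonneg (by positivity) ?_)
    exact mulVec_nonneg_of_nonneg (pow_apply_nonneg_of_nonneg (fun i j => hM (.inr i) (.inr j)) n)
      (fun j => hw _)
  have hεsum : Summable fun n => ‖(lam⁻¹ • B) *ᵥ y n‖ :=
    (hy.mul_left ‖lam⁻¹ • B‖).of_nonneg_of_le (fun _ => norm_nonneg _)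
      fun n => linfty_opNorm_mulVec _ _
  have hz : ∀ n, z (n + 1) = (lam⁻¹ • A) *ᵥ z n + (lam⁻¹ • B) *ᵥ y n := fun n => by
    simp only [z, y, M]
    rw [fromBlocks_zero₂₁_pow_succ_mulVec_inl]
    simp only [smul_mulVec, mulVec_smul, smul_add, smul_smul, pow_succ, mul_inv, mul_comm]
  obtain ⟨α, hαz, hzα⟩ := exists_tendsto_smul_of_perturbed_orbit hω hP hPω hPk hε hεsum hz
  refine ⟨α, (minRatio_pos hω fun i => ?_).trans_le (hαz n₀), tendsto_pi_nhds.2 ?_⟩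
  · exact mul_pos (by positivity) (hw₀ i)
  rintro (i | j)
  · exact tendsto_pi_nhds.1 hzα i
  · have hy0 : Tendsto y atTop (𝓝 0) := hy.of_norm.tendsto_atTop_zero
    refine (tendsto_pi_nhds.1 hy0 j).congr fun n => ?_
    simp [M, y, ← fromBlocks_zero₂₁_pow_mulVec_inr A B C n w]

lemma tendsto_inv_sum_abs_smul_fromBlocks_pow_mulVec
    (hM : ∀ i j, 0 ≤ fromBlocks A B 0 C i j) (hk : ∀ i j, 0 < (A ^ k) i j) (hlam : 0 < lam)
    (hω : ∀ i, 0 < ω i) (hωsum : ∑ i, ω i = 1) (heig : A *ᵥ ω = lam • ω)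
    (hC : Summable fun n => ‖C ^ n‖ / lam ^ n)
    (hw : 0 ≤ w) (hw₀ : ∀ i, 0 < (fromBlocks A B 0 C ^ n₀ *ᵥ w) (Sum.inl i)) :
    Tendsto (fun n => (∑ s, |(fromBlocks A B 0 C ^ n *ᵥ w) s|)⁻¹ • (fromBlocks A B 0 C ^ n *ᵥ w))
      atTop (𝓝 (Sum.elim ω fun _ => 0)) := by
  obtain ⟨α, hα, hlim⟩ := exists_tendsto_inv_pow_smul_fromBlocks_pow_mulVec hM hk hlam hω heig hC
    hw hw₀
  set L : l ⊕ m → ℝ := Sum.elim (α • ω) fun _ => 0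
  have hL : L ≠ 0 := fun h => by
    simpa [L, hα.ne', (hω _).ne'] using congrFun h (Sum.inl (Classical.arbitrary l))
  have hnorm : (∑ s, |L s|)⁻¹ • L = Sum.elim ω fun _ => 0 := by
    ext (i | i) <;> simp [L, Fintype.sum_sum_type, abs_of_pos (mul_pos hα (hω _)), ← Finset.mul_sum,
      hωsum, hα.ne']
  rw [← hnorm]
  exact (hlim.inv_sum_abs_smul hL).congr fun n =>
    inv_sum_abs_smul_smul_of_pos (inv_pos.2 (pow_pos hlam n)) _

end BlockConvergence

theorem block_PF_convergence_general
    (d e : ℕ) (hd : 0 < d)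
    (M : Matrix (Fin d ⊕ Fin e) (Fin d ⊕ Fin e) ℝ)
    (hMnonneg : ∀ i j, 0 ≤ M i j)
    (hblock : ∀ (i : Fin e) (j : Fin d), M (Sum.inr i) (Sum.inl j) = 0)
    (hprim : ∃ n : ℕ, ∀ i j : Fin d, 0 < ((M.submatrix Sum.inl Sum.inl) ^ n) i j)
    (lam : ℝ) (hlam : 0 < lam)
    (ωR : Fin d → ℝ) (hωRpos : ∀ i, 0 < ωR i) (hωRsum : ∑ i, ωR i = 1)
    (heig : (M.submatrix Sum.inl Sum.inl) *ᵥ ωR = lam • ωR)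
    (hC : ∀ μ : ℂ, ((M.submatrix Sum.inr Sum.inr).map (Complex.ofReal : ℝ → ℂ)).charpoly.IsRoot μ →
      ‖μ‖ < lam)
    (hpos : ∃ N : ℕ, ∀ n ≥ N, ∀ (i : Fin d) (j : Fin e), 0 < (M ^ n) (Sum.inl i) (Sum.inr j)) :
    (M *ᵥ (Sum.elim ωR fun _ => 0) = lam • (Sum.elim ωR fun _ => 0)) ∧
    (∀ v : Fin d ⊕ Fin e → ℝ, (∀ i, 0 ≤ v i) → v ≠ 0 →
      (∃ μ : ℝ, M *ᵥ v = μ • v) →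
      ∃ c : ℝ, 0 < c ∧ v = c • (Sum.elim ωR fun _ => 0)) ∧
    (∀ v : Fin d ⊕ Fin e → ℝ, (∀ i, 0 ≤ v i) → v ≠ 0 →
      Tendsto (fun n : ℕ => (∑ i, |((M ^ n) *ᵥ v) i|)⁻¹ • ((M ^ n) *ᵥ v)) atTop
        (nhds (Sum.elim ωR fun _ => 0))) := by
  have : Nonempty (Fin d) := ⟨⟨0, hd⟩⟩
  obtain ⟨A, B, C, rfl⟩ : ∃ A B C, M = fromBlocks A B 0 C :=
    ⟨_, _, _, by rw [← show M.toBlocks₂₁ = 0 from ext hblock, fromBlocks_toBlocks]⟩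
  obtain ⟨k, hk⟩ : ∃ k, ∀ i j, 0 < (A ^ k) i j := hprim
  replace heig : A *ᵥ ωR = lam • ωR := heig
  have hCsum := C.summable_norm_pow_div_of_forall_isRoot_charpoly hlam hC
  have hconv : ∀ v, 0 ≤ v → v ≠ 0 → Tendsto (fun n => (∑ i, |(fromBlocks A B 0 C ^ n *ᵥ v) i|)⁻¹ •
      (fromBlocks A B 0 C ^ n *ᵥ v)) atTop (𝓝 (Sum.elim ωR fun _ => 0)) := fun v hv hv0 =>
    have ⟨_, hn₀⟩ := exists_forall_pos_fromBlocks_pow_mulVec_inl hMnonneg hk hpos hv hv0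
    tendsto_inv_sum_abs_smul_fromBlocks_pow_mulVec hMnonneg hk hlam hωRpos hωRsum heig hCsum hv hn₀
  refine ⟨?_, fun v hv hv0 ⟨μ, hμ⟩ => ?_, fun v hv => hconv v hv⟩
  · rw [fromBlocks_zero₂₁_mulVec_sumElim_zero]
    ext (i | i) <;> simp [heig]
  · have h := hconv v hv hv0
    simp only [pow_mulVec_of_mulVec_eq_smul hμ, smul_smul] at h
    exact exists_pos_smul_eq_of_tendsto_smul hv h (i₀ := .inl ⟨0, hd⟩) (hωRpos _)

theorem block_PF_convergence
    (d e : ℕ) (hd : 0 < d) (he : 0 < e)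
    (M : Matrix (Fin d ⊕ Fin e) (Fin d ⊕ Fin e) ℝ)
    (hMnonneg : ∀ i j, 0 ≤ M i j)
    (hblock : ∀ (i : Fin e) (j : Fin d), M (Sum.inr i) (Sum.inl j) = 0)
    (hprim : ∃ n : ℕ, ∀ i j : Fin d, 0 < ((M.submatrix Sum.inl Sum.inl) ^ n) i j)
    (lam : ℝ) (hlam : 0 < lam)
    (ωR : Fin d → ℝ) (hωRpos : ∀ i, 0 < ωR i) (hωRsum : ∑ i, ωR i = 1)
    (heig : (M.submatrix Sum.inl Sum.inl) *ᵥ ωR = lam • ωR)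
    (hC : ∀ μ : ℂ, ((M.submatrix Sum.inr Sum.inr).map (Complex.ofReal : ℝ → ℂ)).charpoly.IsRoot μ →
      ‖μ‖ < lam)
    (hpos : ∃ N : ℕ, ∀ n ≥ N, ∀ (i : Fin d) (j : Fin e), 0 < (M ^ n) (Sum.inl i) (Sum.inr j)) :
    (M *ᵥ (Sum.elim ωR fun _ => 0) = lam • (Sum.elim ωR fun _ => 0)) ∧
    (∀ v : Fin d ⊕ Fin e → ℝ, (∀ i, 0 ≤ v i) → v ≠ 0 →
      (∃ μ : ℝ, M *ᵥ v = μ • v) →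
      ∃ c : ℝ, 0 < c ∧ v = c • (Sum.elim ωR fun _ => 0)) ∧
    (∀ v : Fin d ⊕ Fin e → ℝ, (∀ i, 0 ≤ v i) → v ≠ 0 →
      Tendsto (fun n : ℕ => (∑ i, |((M ^ n) *ᵥ v) i|)⁻¹ • ((M ^ n) *ᵥ v)) atTop
        (nhds (Sum.elim ωR fun _ => 0))) :=
  block_PF_convergence_general d e hd M hMnonneg hblock hprim lam hlam ωR hωRpos hωRsum heig hC hpos
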